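/- arXiv:0809.0946 — 3 statements merged into one kernel-verified Lean document; each statement's English description precedes it below -/
import Mathlib

section
/- An element x = x0 + x1·e1 + x2·e2 of the type II algebra A is invertible if and only if x0² - x1² ≠ 0, and in that case its inverse is (x0 - x1·e1 - x2·e2)/(x0² - x1²). -/
noncomputable section

/-- The underlying space of the type II algebra: coordinates (x0, x1, x2) w.r.t. basis (1, e1, e2). -/
abbrev A3 := ℝ × ℝ × ℝ

/-- Multiplication of the type II algebra (e1² = 1, e1·e2 = e2, e2·e1 = -e2, e2² = 0). -/
def Amul (x y : A3) : A3 :=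
  (x.1 * y.1 + x.2.1 * y.2.1,
   x.1 * y.2.1 + x.2.1 * y.1,
   x.2.2 * (y.1 - y.2.1) + (x.1 + x.2.1) * y.2.2)

/-- The unit 1 of the algebra. -/
def Aone : A3 := (1, 0, 0)

/-- Conjugation x0 + x1·e1 + x2·e2 ↦ x0 - x1·e1 - x2·e2. -/
def Aconj (x : A3) : A3 := (x.1, -x.2.1, -x.2.2)

/-- Squared norm |x|² = x0² - x1². -/
def nsq (x : A3) : ℝ := x.1 ^ 2 - x.2.1 ^ 2

/-- The group of invertible elements G = {x : x0² - x1² ≠ 0}. -/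
def Gset : Set A3 := {x | x.1 ^ 2 - x.2.1 ^ 2 ≠ 0}

/-- The subgroup H1 of invertible double numbers x0 + x1·e1. -/
def H1 : Set A3 := {x | x.2.2 = 0 ∧ x.1 ^ 2 - x.2.1 ^ 2 ≠ 0}

/-- The projection π(x) = x2 / (x0 - x1). -/
def piMap (x : A3) : ℝ := x.2.2 / (x.1 - x.2.1)

/-- x = x0 + x1·e1 + x2·e2 is invertible iff x0² - x1² ≠ 0, and in that case its inverse is
(x0 - x1·e1 - x2·e2)/(x0² - x1²). -/
theorem typeII_invertible_iff (x : A3) :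
    ((∃ y : A3, Amul x y = Aone ∧ Amul y x = Aone) ↔ x.1 ^ 2 - x.2.1 ^ 2 ≠ 0) ∧
    (x.1 ^ 2 - x.2.1 ^ 2 ≠ 0 →
      Amul x ((x.1 ^ 2 - x.2.1 ^ 2)⁻¹ • (x.1, -x.2.1, -x.2.2)) = Aone ∧
      Amul ((x.1 ^ 2 - x.2.1 ^ 2)⁻¹ • (x.1, -x.2.1, -x.2.2)) x = Aone) := by
  have key : x.1 ^ 2 - x.2.1 ^ 2 ≠ 0 →
      Amul x ((x.1 ^ 2 - x.2.1 ^ 2)⁻¹ • (x.1, -x.2.1, -x.2.2)) = Aone ∧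
      Amul ((x.1 ^ 2 - x.2.1 ^ 2)⁻¹ • (x.1, -x.2.1, -x.2.2)) x = Aone := by
    intro h
    constructor <;>
    · simp only [Amul, Aone, Prod.smul_def, smul_eq_mul, Prod.mk.injEq]
      refine ⟨?_, ?_, ?_⟩ <;> field_simp <;> ring
  refine ⟨⟨?_, fun h => ⟨_, key h⟩⟩, key⟩
  rintro ⟨y, hxy, -⟩
  intro h
  have h1 := congrArg Prod.fst hxy
  have h2 := congrArg (fun p : A3 => p.2.1) hxy
  simp only [Amul, Aone] at h1 h2
  have key2 : (x.1 * y.1 + x.2.1 * y.2.1) ^ 2 - (x.1 * y.2.1 + x.2.1 * y.1) ^ 2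
      = (x.1 ^ 2 - x.2.1 ^ 2) * (y.1 ^ 2 - y.2.1 ^ 2) := by ring
  rw [h1, h2, h] at key2
  norm_num at key2
end
end

section
/- The set G = {x ∈ A : x0² - x1² ≠ 0} of invertible elements of the type II algebra A forms a group under the algebra multiplication, and this group is non-abelian. -/
noncomputable section

/-- G = {x : x0² - x1² ≠ 0} is a group under the algebra multiplication and is non-abelian. -/
theorem typeII_units_group_nonabelian :
    (∀ x ∈ Gset, ∀ y ∈ Gset, Amul x y ∈ Gset) ∧
    Aone ∈ Gset ∧
    (∀ x, Amul Aone x = x ∧ Amul x Aone = x) ∧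
    (∀ x y z : A3, Amul (Amul x y) z = Amul x (Amul y z)) ∧
    (∀ x ∈ Gset, ∃ y ∈ Gset, Amul x y = Aone ∧ Amul y x = Aone) ∧
    (∃ x ∈ Gset, ∃ y ∈ Gset, Amul x y ≠ Amul y x) := by

  refine ⟨?_, ?_, ?_, ?_, ?_, ?_⟩
  · intro x hx y hy
    simp only [Gset, Set.mem_setOf_eq, Amul] at *
    intro h
    apply hx
    have : (x.1 ^ 2 - x.2.1 ^ 2) * (y.1 ^ 2 - y.2.1 ^ 2) = 0 := by nlinarith [h]
    rcases mul_eq_zero.mp this with h1 | h1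
    · exact h1
    · exact absurd h1 hy
  · simp [Gset, Aone]
  · intro x
    constructor <;> simp [Amul, Aone]
  · intro x y z
    simp only [Amul, Prod.mk.injEq]
    refine ⟨by ring, by ring, by ring⟩
  · intro x hx
    simp only [Gset, Set.mem_setOf_eq] at hx
    set n := x.1 ^ 2 - x.2.1 ^ 2 with hn
    refine ⟨(x.1 / n, -x.2.1 / n, -x.2.2 / n), ?_, ?_, ?_⟩
    · simp only [Gset, Set.mem_setOf_eq]
      intro h
      apply hx
      field_simp at h
      nlinarith [h, sq_nonneg (x.1^2 - x.2.1^2)]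
    · simp only [Amul, Aone, Prod.mk.injEq]
      refine ⟨by field_simp; ring, by field_simp; ring, by field_simp; ring⟩
    · simp only [Amul, Aone, Prod.mk.injEq]
      refine ⟨by field_simp; ring, by field_simp; ring, by field_simp; ring⟩
  · refine ⟨(0, 1, 0), by norm_num [Gset], (1, 0, 1), by norm_num [Gset], ?_⟩
    intro h
    have := congrArg (fun p : A3 => p.2.2) h
    norm_num [Amul] at this
end
end

section
/- If a ∈ A satisfies |a|² = a·conj(a) = 1, then for every x ∈ G with |x|² ≠ 0, the quantity (x, a·x)/(|x|²) = (1/2)(a + conj(a)) = a0 is independent of x; i.e., the 'angle' between x and a·x under the left rotation x ↦ a·x does not depend on x. The same holds for the right rotation x ↦ x·a. -/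
noncomputable section

/-- The scalar product (x, y) = x0·y0 - x1·y1. -/
def form (x y : A3) : ℝ := x.1 * y.1 - x.2.1 * y.2.1

/-- If |a|² = a·conj(a) = 1, then for every x ∈ G with |x|² ≠ 0 the 'angle'
(x, a·x)/|x|² = (1/2)(a + conj a) = a0 is independent of x; the same holds for x ↦ x·a. -/
theorem typeII_rotation_angle (a : A3) (ha : Amul a (Aconj a) = Aone) :
    (1 / 2 : ℝ) • (a + Aconj a) = a.1 • Aone ∧
    ∀ x : A3, nsq x ≠ 0 →
      form x (Amul a x) / nsq x = a.1 ∧ form x (Amul x a) / nsq x = a.1 := by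
  constructor
  · simp only [Aconj, Aone, Prod.smul_def, Prod.mk_add_mk, Prod.ext_iff, smul_eq_mul,
      Prod.fst_add, Prod.snd_add]
    constructor <;> [skip; constructor] <;> ring
  · intro x hx
    constructor <;>
    · rw [div_eq_iff hx]
      simp only [form, Amul, nsq]
      ring
end
end
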